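/- Fix integers k ≥ 1, s ≥ 0, t ≥ 0 and let p(x,y,z) be a real polynomial that is homogeneous of degree k with y-degree at most s and z-degree at most t. Set h(x,u) = p(x, u−1, u). Suppose w is a real-valued function, differentiable at 0, with w(0) = w₀ and Q^θ_{s,t}[p](0, w(θ)−1, w(θ)) = 0 for all θ in a neighborhood of 0. Then w'(0)·∂_u h(0, w₀) = −[(s−k+1)(w₀−1) + (t−k+1)w₀]·∂_x h(0, w₀) − w₀(w₀−1)·∂_u∂_x h(0, w₀). -/

import Mathlib

/-!
Adjoining `θ` as an extra polynomial variable turns `Q^θ_{s,t}[p]` into a single polynomial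
in `(θ, x, y, z)`, so `θ ↦ Q^θ_{s,t}[p](0, w(θ) - 1, w(θ))` is differentiable at `0` by the
chain rule, with derivative `0` since the function vanishes near `0`. At `θ = 0` the operator
is the identity, and to first order each factor `1 + θ y ∂_x` contributes `y ∂_x`; summing
`(s - j)` over the monomials `x^i y^j z^l` of `p` gives the `θ`-derivative
`y (s q - y ∂_y q) + z (t q - z ∂_z q)` with `q = ∂_x p`. On `x = 0`, Euler's identity
`y ∂_y q + z ∂_z q = (k - 1) q` for the form `q` of degree `k - 1` converts this into the stated
combination of `∂_x h` and `∂_u ∂_x h`.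
-/

open MvPolynomial

noncomputable section

/-- The operator `Q^θ_{s,t}`, defined on monomials by
`x^i y^j z^l ↦ (1 + θy∂_x)^(s−j) (1 + θz∂_x)^(t−l) [x^i y^j z^l]` and extended linearly.
Here `x = X 0`, `y = X 1`, `z = X 2`. -/
def Qop (s t : ℕ) (θ : ℝ) (p : MvPolynomial (Fin 3) ℝ) : MvPolynomial (Fin 3) ℝ :=
  ∑ m ∈ p.support,
    (fun q => q + θ • ((X 1 : MvPolynomial (Fin 3) ℝ) * pderiv 0 q))^[s - m 1]
      ((fun q => q + θ • ((X 2 : MvPolynomial (Fin 3) ℝ) * pderiv 0 q))^[t - m 2]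
        (monomial m (coeff m p)))

/-- `h(x,u) = p(x, u−1, u)`, as a polynomial in `x = X 0` and `u = X 1`. -/
def hSub (p : MvPolynomial (Fin 3) ℝ) : MvPolynomial (Fin 2) ℝ :=
  aeval ![(X 0 : MvPolynomial (Fin 2) ℝ), (X 1 : MvPolynomial (Fin 2) ℝ) - 1,
    (X 1 : MvPolynomial (Fin 2) ℝ)] p

namespace MvPolynomial

variable {R σ τ : Type*}

section CommSemiring

variable [CommSemiring R]

theorem pderiv_comm (i j : σ) (p : MvPolynomial σ R) :
    pderiv i (pderiv j p) = pderiv j (pderiv i p) := by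
  classical
  induction p using MvPolynomial.induction_on with
  | C a => simp
  | add p q hp hq => simp only [map_add, hp, hq]
  | mul_X p k ih =>
    simp only [pderiv_mul, map_add, ih, pderiv_X, Pi.single_apply]
    split_ifs <;> simp only [map_zero, pderiv_one] <;> ring

theorem pderiv_aeval [Fintype σ] (g : σ → MvPolynomial τ R) (j : τ) (q : MvPolynomial σ R) :
    pderiv j (aeval g q) = ∑ i, aeval g (pderiv i q) * pderiv j (g i) := by
  classical
  induction q using MvPolynomial.induction_on with
  | C a => simp
  | add p q hp hq => simp only [map_add, hp, hq, Finset.sum_add_distrib, add_mul]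
  | mul_X p k ih =>
    simp only [map_mul, aeval_X, pderiv_mul, ih, map_add, pderiv_X, Pi.single_apply, add_mul,
      Finset.sum_add_distrib, Finset.sum_mul]
    simp [mul_right_comm]

theorem eval_aeval (v : τ → R) (g : σ → MvPolynomial τ R) (q : MvPolynomial σ R) :
    eval v (aeval g q) = eval (fun i => eval v (g i)) q :=
  comp_aeval_apply (f := g) (aeval v) q

theorem sum_support_nsmul_monomial (i : σ) (p : MvPolynomial σ R) :
    ∑ m ∈ p.support, m i • monomial m (coeff m p) = X i * pderiv i p := by
  conv_rhs => rw [← p.support_sum_monomial_coeff]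
  simp only [map_sum, Finset.mul_sum, X_mul_pderiv_monomial]

theorem pderiv_rename_eq_zero {f : σ → τ} {i : τ} (hi : i ∉ Set.range f)
    (p : MvPolynomial σ R) :
    pderiv i (rename f p) = 0 := by
  classical
  refine pderiv_eq_zero_of_notMem_vars fun h => hi ?_
  obtain ⟨j, -, rfl⟩ := Finset.mem_image.mp (vars_rename f p h)
  exact ⟨j, rfl⟩

end CommSemiring

theorem sum_support_sub_nsmul_X_mul_pderiv [CommRing R] {a b : σ} (hab : a ≠ b)
    {s : ℕ} {p : MvPolynomial σ R} (hs : ∀ m ∈ p.support, m a ≤ s) :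
    ∑ m ∈ p.support, (s - m a) • (X a * pderiv b (monomial m (coeff m p)))
      = X a * (s • pderiv b p - X a * pderiv a (pderiv b p)) := by
  have hsum : ∑ m ∈ p.support, m a • (X a * pderiv b (monomial m (coeff m p)))
      = X a * (X a * pderiv a (pderiv b p)) := by
    simp_rw [← mul_smul_comm, ← Finset.mul_sum, ← map_nsmul (pderiv b), ← map_sum,
      sum_support_nsmul_monomial, pderiv_mul, pderiv_X_of_ne hab, zero_mul, zero_add, pderiv_comm]
  rw [Finset.sum_congr rfl fun m hm => by rw [sub_nsmul _ (hs m hm), ← sub_eq_add_neg],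
    Finset.sum_sub_distrib, hsum, ← Finset.smul_sum, ← Finset.mul_sum, ← map_sum,
    support_sum_monomial_coeff, mul_sub, mul_smul_comm]

theorem hasDerivAt_eval {𝕜 : Type*} [NontriviallyNormedField 𝕜] [Fintype σ]
    (q : MvPolynomial σ 𝕜) {f : σ → 𝕜 → 𝕜} {f' : σ → 𝕜} {x : 𝕜}
    (hf : ∀ i, HasDerivAt (f i) (f' i) x) :
    HasDerivAt (fun θ => eval (fun i => f i θ) q)
      (∑ i, f' i * eval (fun i => f i x) (pderiv i q)) x := by
  classical
  induction q using MvPolynomial.induction_on with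
  | C a => simpa using hasDerivAt_const x a
  | add p q hp hq => simpa [mul_add, Finset.sum_add_distrib] using hp.fun_add hq
  | mul_X p k ih =>
    simp only [eval_mul, eval_X]
    refine (ih.fun_mul (hf k)).congr_deriv ?_
    simp only [Derivation.leibniz, pderiv_X, Pi.single_apply, apply_ite, smul_eq_mul, mul_one,
      mul_zero, map_add, map_zero, map_mul, eval_X, mul_add, Finset.sum_add_distrib,
      Finset.sum_ite_eq, Finset.mem_univ, ↓reduceIte]
    rw [Finset.sum_mul, add_comm]
    exact congrArg₂ _ (mul_comm _ _) (Finset.sum_congr rfl fun i _ => by ring)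

end MvPolynomial

section SpecializeHead

variable {R : Type*} [CommRing R] {n : ℕ}

def specializeHead (c : R) : MvPolynomial (Fin (n + 1)) R →ₐ[R] MvPolynomial (Fin n) R :=
  aeval (Fin.cons (C c) X)

@[simp] theorem specializeHead_X_zero (c : R) :
    specializeHead (n := n) c (X 0) = C c := by
  simp [specializeHead]

@[simp] theorem specializeHead_X_succ (c : R) (i : Fin n) :
    specializeHead c (X i.succ) = X i := by
  simp [specializeHead]

theorem eval_specializeHead (c : R) (v : Fin n → R) (r : MvPolynomial (Fin (n + 1)) R) :
    eval v (specializeHead c r) = eval (Fin.cons c v) r := by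
  rw [specializeHead, eval_aeval]
  exact congrArg (eval · r) (funext fun i => Fin.cases (by simp) (fun i => by simp) i)

theorem specializeHead_rename_succ (c : R) (r : MvPolynomial (Fin n) R) :
    specializeHead c (rename Fin.succ r) = r := by
  rw [specializeHead, aeval_rename]
  exact aeval_X_left_apply r

theorem pderiv_specializeHead (c : R) (i : Fin n) (r : MvPolynomial (Fin (n + 1)) R) :
    pderiv i (specializeHead c r) = specializeHead c (pderiv i.succ r) := by
  classical
  rw [specializeHead, pderiv_aeval, Fin.sum_univ_succ]
  simp [pderiv_X, Pi.single_apply]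

def headStep (a b : Fin n) (q : MvPolynomial (Fin (n + 1)) R) : MvPolynomial (Fin (n + 1)) R :=
  q + X 0 * (X a.succ * pderiv b.succ q)

theorem semiconj_specializeHead_headStep (c : R) (a b : Fin n) :
    Function.Semiconj (specializeHead c) (headStep a b) (fun q => q + c • (X a * pderiv b q)) :=
  fun q => by simp [headStep, pderiv_specializeHead, smul_eq_C_mul]

theorem specializeHead_zero_iterate_headStep (a b : Fin n) (k : ℕ)
    (q : MvPolynomial (Fin (n + 1)) R) :
    specializeHead 0 ((headStep a b)^[k] q) = specializeHead 0 q := by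
  simpa [← Function.id_def] using (semiconj_specializeHead_headStep (0 : R) a b).iterate_right k q

theorem specializeHead_zero_pderiv_zero_iterate_headStep (a b : Fin n) (k : ℕ)
    (q : MvPolynomial (Fin (n + 1)) R) :
    specializeHead 0 (pderiv 0 ((headStep a b)^[k] q))
      = specializeHead 0 (pderiv 0 q) + k • (X a * pderiv b (specializeHead 0 q)) := by
  induction k with
  | zero => simp
  | succ k ih =>
    rw [Function.iterate_succ_apply', headStep]
    simp only [map_add, pderiv_mul, pderiv_X_self, pderiv_X_of_ne (Fin.succ_ne_zero _), one_mul,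
      zero_mul, add_zero, map_mul, specializeHead_X_zero, specializeHead_X_succ, C_0, ih,
      ← pderiv_specializeHead, specializeHead_zero_iterate_headStep, succ_nsmul]
    abel

end SpecializeHead

-- `Qop` with `θ` promoted to the variable `X 0`, and `x, y, z` shifted to `X 1, X 2, X 3`.
def QopLift (s t : ℕ) (p : MvPolynomial (Fin 3) ℝ) : MvPolynomial (Fin 4) ℝ :=
  ∑ m ∈ p.support,
    (headStep 1 0)^[s - m 1] ((headStep 2 0)^[t - m 2] (rename Fin.succ (monomial m (coeff m p))))

theorem specializeHead_QopLift (s t : ℕ) (θ : ℝ) (p : MvPolynomial (Fin 3) ℝ) :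
    specializeHead θ (QopLift s t p) = Qop s t θ p := by
  simp only [QopLift, Qop, map_sum]
  refine Finset.sum_congr rfl fun m _ => ?_
  rw [(semiconj_specializeHead_headStep θ 1 0).iterate_right,
    (semiconj_specializeHead_headStep θ 2 0).iterate_right, specializeHead_rename_succ]

theorem Qop_zero (s t : ℕ) (p : MvPolynomial (Fin 3) ℝ) : Qop s t 0 p = p := by
  simp [Qop, ← Function.id_def, support_sum_monomial_coeff]

-- `∂_θ (Qop s t θ p)` at `θ = 0`, when `degreeOf 1 p ≤ s` and `degreeOf 2 p ≤ t`.
def QopDerivAtZero (s t : ℕ) (p : MvPolynomial (Fin 3) ℝ) : MvPolynomial (Fin 3) ℝ :=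
  X 1 * (s • pderiv 0 p - X 1 * pderiv 1 (pderiv 0 p))
    + X 2 * (t • pderiv 0 p - X 2 * pderiv 2 (pderiv 0 p))

theorem specializeHead_zero_pderiv_zero_QopLift {s t : ℕ} {p : MvPolynomial (Fin 3) ℝ}
    (hs : p.degreeOf 1 ≤ s) (ht : p.degreeOf 2 ≤ t) :
    specializeHead 0 (pderiv 0 (QopLift s t p)) = QopDerivAtZero s t p := by
  have hθfree (r : MvPolynomial (Fin 3) ℝ) : pderiv 0 (rename Fin.succ r) = 0 :=
    pderiv_rename_eq_zero (by simp) r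
  rw [QopLift, QopDerivAtZero, map_sum, map_sum]
  simp_rw [specializeHead_zero_pderiv_zero_iterate_headStep, specializeHead_zero_iterate_headStep,
    specializeHead_rename_succ, hθfree, map_zero, zero_add]
  rw [Finset.sum_add_distrib, add_comm,
    sum_support_sub_nsmul_X_mul_pderiv (by decide) fun m hm => (monomial_le_degreeOf 1 hm).trans hs,
    sum_support_sub_nsmul_X_mul_pderiv (by decide) fun m hm => (monomial_le_degreeOf 2 hm).trans ht]

theorem hasDerivAt_eval_Qop {s t : ℕ} {p : MvPolynomial (Fin 3) ℝ}
    (hs : p.degreeOf 1 ≤ s) (ht : p.degreeOf 2 ≤ t) {w : ℝ → ℝ} {w' : ℝ}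
    (hw : HasDerivAt w w' 0) :
    HasDerivAt (fun θ => eval ![0, w θ - 1, w θ] (Qop s t θ p))
      (eval ![0, w 0 - 1, w 0] (QopDerivAtZero s t p)
        + w' * eval ![0, w 0 - 1, w 0] (pderiv 1 p + pderiv 2 p)) 0 := by
  simp_rw [← specializeHead_QopLift, eval_specializeHead]
  have hcurve : ∀ i, HasDerivAt (fun θ => (Fin.cons θ ![0, w θ - 1, w θ] : Fin 4 → ℝ) i)
      (![1, 0, w', w'] i) 0 := by
    intro i
    fin_cases i
    · exact hasDerivAt_id 0
    · exact hasDerivAt_const 0 0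
    · exact hw.sub_const 1
    · exact hw
  have hxyz (v : Fin 3 → ℝ) (j : Fin 3) :
      eval (Fin.cons 0 v) (pderiv j.succ (QopLift s t p)) = eval v (pderiv j p) := by
    rw [← eval_specializeHead, ← pderiv_specializeHead, specializeHead_QopLift, Qop_zero]
  refine (hasDerivAt_eval (QopLift s t p) hcurve).congr_deriv ?_
  have hθ (v : Fin 3 → ℝ) :
      eval (Fin.cons 0 v) (pderiv 0 (QopLift s t p)) = eval v (QopDerivAtZero s t p) := by
    rw [← eval_specializeHead, specializeHead_zero_pderiv_zero_QopLift hs ht]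
  rw [Fin.sum_univ_four, show (2 : Fin 4) = Fin.succ 1 from rfl,
    show (3 : Fin 4) = Fin.succ 2 from rfl, hθ, hxyz, hxyz, map_add]
  simp only [Matrix.cons_val_zero, Matrix.cons_val_one, Matrix.cons_val, Fin.succ_one_eq_two,
    Fin.reduceSucc, one_mul, zero_mul, add_zero]
  ring

theorem pderiv_zero_hSub (p : MvPolynomial (Fin 3) ℝ) :
    pderiv 0 (hSub p) = hSub (pderiv 0 p) := by
  rw [hSub, pderiv_aeval, Fin.sum_univ_three]
  simp [hSub, pderiv_X]

theorem pderiv_one_hSub (p : MvPolynomial (Fin 3) ℝ) :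
    pderiv 1 (hSub p) = hSub (pderiv 1 p + pderiv 2 p) := by
  rw [hSub, pderiv_aeval, Fin.sum_univ_three]
  simp [hSub, pderiv_X]

theorem eval_hSub (x u : ℝ) (p : MvPolynomial (Fin 3) ℝ) :
    eval ![x, u] (hSub p) = eval ![x, u - 1, u] p := by
  rw [hSub, eval_aeval]
  congr
  ext i
  fin_cases i <;> simp

theorem MvPolynomial.IsHomogeneous.eval_euler_of_head_eq_zero {n : ℕ}
    {q : MvPolynomial (Fin 3) ℝ} (hq : q.IsHomogeneous n) (y z : ℝ) :
    y * eval ![0, y, z] (pderiv 1 q) + z * eval ![0, y, z] (pderiv 2 q)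
      = n * eval ![0, y, z] q := by
  simpa [Fin.sum_univ_three] using congrArg (eval ![0, y, z]) hq.sum_X_mul_pderiv

theorem stmt16 (k s t : ℕ) (hk : 1 ≤ k) (p : MvPolynomial (Fin 3) ℝ)
    (hhom : p.IsHomogeneous k) (hs : p.degreeOf 1 ≤ s) (ht : p.degreeOf 2 ≤ t)
    (w : ℝ → ℝ) (w₀ : ℝ) (hw : DifferentiableAt ℝ w 0) (hw0 : w 0 = w₀)
    (hzero : ∀ᶠ θ in nhds (0 : ℝ),
      eval ![(0 : ℝ), w θ - 1, w θ] (Qop s t θ p) = 0) :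
    deriv w 0 * eval ![(0 : ℝ), w₀] (pderiv 1 (hSub p))
      = -(((s : ℝ) - k + 1) * (w₀ - 1) + ((t : ℝ) - k + 1) * w₀) *
            eval ![(0 : ℝ), w₀] (pderiv 0 (hSub p))
        - w₀ * (w₀ - 1) * eval ![(0 : ℝ), w₀] (pderiv 1 (pderiv 0 (hSub p))) := by
  have hflat := (hasDerivAt_eval_Qop hs ht hw.hasDerivAt).unique
    ((hasDerivAt_const (0 : ℝ) (0 : ℝ)).congr_of_eventuallyEq hzero)
  have heuler := (hhom.pderiv (i := 0)).eval_euler_of_head_eq_zero (w₀ - 1) w₀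
  rw [Nat.cast_sub hk, Nat.cast_one] at heuler
  rw [hw0] at hflat
  simp only [QopDerivAtZero, pderiv_zero_hSub, pderiv_one_hSub, eval_hSub, map_add, map_sub,
    map_mul, map_natCast, nsmul_eq_mul, eval_X, Matrix.cons_val_zero, Matrix.cons_val_one,
    Matrix.cons_val] at hflat ⊢
  linear_combination hflat + (2 * w₀ - 1) * heuler

end
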